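/- arXiv:2604.21240 — 2 statements merged into one kernel-verified Lean document; each statement's English description precedes it below -/
import Mathlib

section
/- Let M and N be finitely generated bigraded F₂[u]-modules, where u is homogeneous of bidegree (−1, −½) (Maslov, Alexander), the Alexander grading takes values in ½ℤ, and both M and N have nonzero rank (i.e., contain non-torsion elements). Define τ(M) = −2·max{A(x) : x a homogeneous non-torsion element of M}. Suppose σ : M → N and μ : N → M are bigraded module maps, each homogeneous of bidegree (−1, −½), with μ∘σ = u²·id_M and σ∘μ = u²·id_N. Then |τ(M) − τ(N)| ≤ 1. -/
/-!
If `x` is homogeneous and non-torsion of Alexander grading `s`, then `σ x` is homogeneous of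
grading `s - 1` and still non-torsion, since `μ (σ x) = u² x`. So the maximal grading drops by at
most one from `M` to `N`, and symmetrically from `N` to `M`. The maxima exist because a
non-torsion element has a non-torsion homogeneous component, and because finite generation
bounds the Alexander gradings of nonzero homogeneous elements.
-/

open Polynomial

/-- The set of (doubled) Alexander gradings of homogeneous non-torsion elements of a
bigraded `𝔽₂[u]`-module, whose bigrading (Maslov, twice-Alexander) is given by the
family `g` of `𝔽₂`-subspaces; `τ` is `−1` times the greatest element of this set
(equivalently, `−2` times the largest Alexander grading of a homogeneous non-torsion
element). -/
def gradedNonTorsion {M : Type} [AddCommGroup M] [Module (Polynomial (ZMod 2)) M]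
    [Module (ZMod 2) M] (g : ℤ × ℤ → Submodule (ZMod 2) M) : Set ℤ :=
  {s : ℤ | ∃ (d : ℤ) (x : M), x ∈ g (d, s) ∧ x ∉ Submodule.torsion (Polynomial (ZMod 2)) M}

section Polynomial

variable {R M : Type*} [CommSemiring R] [AddCommMonoid M] [Module R[X] M] [Module R M]
  [IsScalarTower R R[X] M]

theorem Submodule.smul_mem_of_forall_X_smul_mem (W : Submodule R M)
    (hW : ∀ w ∈ W, (X : R[X]) • w ∈ W) (f : R[X]) {w : M} (hw : w ∈ W) : f • w ∈ W := by
  have hXpow : ∀ (n : ℕ) {w : M}, w ∈ W → (X : R[X]) ^ n • w ∈ W := by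
    intro n
    induction n with
    | zero => simp
    | succ n ih => exact fun hw => by rw [pow_succ, mul_smul]; exact ih (hW _ hw)
  induction f using Polynomial.induction_on' with
  | add p q hp hq => rw [add_smul]; exact W.add_mem hp hq
  | monomial n a =>
    rw [← C_mul_X_pow_eq_monomial, mul_smul, ← algebraMap_eq, algebraMap_smul]
    exact W.smul_mem a (hXpow n hw)

def Submodule.ofXSMulMem (W : Submodule R M) (hW : ∀ w ∈ W, (X : R[X]) • w ∈ W) :
    Submodule R[X] M where
  toAddSubmonoid := W.toAddSubmonoid
  smul_mem' f _ hw := W.smul_mem_of_forall_X_smul_mem hW f hw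

end Polynomial

theorem notMem_torsion_of_comp_eq_smul {R P Q : Type*} [CommSemiring R] [AddCommMonoid P]
    [AddCommMonoid Q] [Module R P] [Module R Q] (f : P →ₗ[R] Q) (g : Q →ₗ[R] P) {a : R}
    (ha : a ∈ nonZeroDivisors R) (hgf : ∀ x, g (f x) = a • x) {x : P}
    (hx : x ∉ Submodule.torsion R P) : f x ∉ Submodule.torsion R Q := by
  intro hfx
  obtain ⟨b, hb⟩ := (Submodule.mem_torsion_iff _).mp hfx
  refine hx ((Submodule.mem_torsion_iff _).mpr ⟨⟨b * a, mul_mem b.2 ha⟩, ?_⟩)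
  rw [Submonoid.mk_smul, mul_smul, ← hgf, ← map_smul]
  exact (congrArg g hb).trans (map_zero g)

section AlexanderFiltration

variable {R M : Type*} [CommSemiring R] [AddCommMonoid M] [Module R M]

def alexanderFiltration (g : ℤ × ℤ → Submodule R M) (S : ℤ) : Submodule R M :=
  ⨆ (p : ℤ × ℤ) (_ : p.2 ≤ S), g p

variable (g : ℤ × ℤ → Submodule R M)

theorem alexanderFiltration_mono : Monotone (alexanderFiltration g) :=
  fun _ _ hST => iSup₂_mono' fun p hp => ⟨p, hp.trans hST, le_rfl⟩

theorem le_alexanderFiltration (p : ℤ × ℤ) : g p ≤ alexanderFiltration g p.2 :=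
  le_iSup₂_of_le p le_rfl le_rfl

theorem eq_bot_of_alexanderFiltration_eq_top (hg : DirectSum.IsInternal g)
    {S : ℤ} (hS : alexanderFiltration g S = ⊤) {p : ℤ × ℤ} (hp : S < p.2) : g p = ⊥ := by
  have hdisj : Disjoint (g p) (⨆ q ∈ {q : ℤ × ℤ | q.2 ≤ S}, g q) :=
    hg.submodule_iSupIndep.disjoint_biSup fun h => hp.not_ge h
  change Disjoint (g p) (alexanderFiltration g S) at hdisj
  rwa [hS, disjoint_top] at hdisj

variable [Module R[X] M] [IsScalarTower R R[X] M]

theorem X_smul_mem_alexanderFiltration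
    (hu : ∀ (p : ℤ × ℤ) (x : M), x ∈ g p → (X : R[X]) • x ∈ g (p.1 - 1, p.2 - 1))
    (S : ℤ) : ∀ w ∈ alexanderFiltration g S, (X : R[X]) • w ∈ alexanderFiltration g S := by
  suffices alexanderFiltration g S ≤
      (alexanderFiltration g S).comap ((LinearMap.lsmul R[X] M X).restrictScalars R) from
    fun w hw => this hw
  refine iSup₂_le fun p hp x hx => ?_
  exact alexanderFiltration_mono g (by omega) (le_alexanderFiltration g _ (hu p x hx))

/-- `M` is the increasing union of the `X`-stable pieces `alexanderFiltration g S`,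
so finite generation forces one of them to be everything. -/
theorem exists_alexanderFiltration_eq_top [Module.Finite R[X] M]
    (hg : DirectSum.IsInternal g)
    (hu : ∀ (p : ℤ × ℤ) (x : M), x ∈ g p → (X : R[X]) • x ∈ g (p.1 - 1, p.2 - 1)) :
    ∃ S, alexanderFiltration g S = ⊤ := by
  let F : ℤ → Submodule R[X] M := fun S =>
    (alexanderFiltration g S).ofXSMulMem (X_smul_mem_alexanderFiltration g hu S)
  have hF : Monotone F := fun _ _ hST => alexanderFiltration_mono g hST
  have hcover : ⊤ ≤ sSup (Set.range F) := by
    rw [← Submodule.restrictScalars_le R, Submodule.restrictScalars_top,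
      ← hg.submodule_iSup_eq_top, sSup_range]
    exact iSup_le fun p => (le_alexanderFiltration g p).trans
      ((Submodule.restrictScalars_le R).mpr (le_iSup F p.2))
  obtain ⟨_, ⟨S, rfl⟩, hS⟩ :=
    (CompleteLattice.isCompactElement_iff_le_of_directed_sSup_le _ _).mp
      ((Submodule.fg_iff_compact ⊤).mp (Module.Finite.fg_top)) _ (Set.range_nonempty F)
      (directedOn_range.mpr hF.directed_le) hcover
  exact ⟨S, eq_top_iff.mpr fun x _ => hS trivial⟩

end AlexanderFiltration

section GradedNonTorsion

variable {M : Type} [AddCommGroup M] [Module (ZMod 2)[X] M] [Module (ZMod 2) M]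

theorem gradedNonTorsion_nonempty [IsScalarTower (ZMod 2) (ZMod 2)[X] M]
    (g : ℤ × ℤ → Submodule (ZMod 2) M) (hg : DirectSum.IsInternal g)
    (hrk : ∃ x : M, x ∉ Submodule.torsion (ZMod 2)[X] M) :
    (gradedNonTorsion g).Nonempty := by
  by_contra hempty
  have hg_torsion : ∀ p, g p ≤ (Submodule.torsion (ZMod 2)[X] M).restrictScalars (ZMod 2) :=
    fun p x hx => by_contra fun hxt => hempty ⟨p.2, p.1, x, hx, hxt⟩
  obtain ⟨x, hx⟩ := hrk
  exact hx (iSup_le hg_torsion (hg.submodule_iSup_eq_top ▸ Submodule.mem_top))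

theorem bddAbove_gradedNonTorsion [IsScalarTower (ZMod 2) (ZMod 2)[X] M]
    [Module.Finite (ZMod 2)[X] M] (g : ℤ × ℤ → Submodule (ZMod 2) M)
    (hg : DirectSum.IsInternal g)
    (hu : ∀ (p : ℤ × ℤ) (x : M), x ∈ g p → (X : (ZMod 2)[X]) • x ∈ g (p.1 - 1, p.2 - 1)) :
    BddAbove (gradedNonTorsion g) := by
  obtain ⟨S, hS⟩ := exists_alexanderFiltration_eq_top g hg hu
  refine ⟨S, fun s ⟨d, x, hx, hxt⟩ => not_lt.mp fun hlt => hxt ?_⟩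
  rw [eq_bot_of_alexanderFiltration_eq_top g hg hS (p := (d, s)) hlt,
    Submodule.mem_bot] at hx
  exact hx ▸ Submodule.zero_mem _

theorem isGreatest_gradedNonTorsion [IsScalarTower (ZMod 2) (ZMod 2)[X] M]
    [Module.Finite (ZMod 2)[X] M] (g : ℤ × ℤ → Submodule (ZMod 2) M)
    (hg : DirectSum.IsInternal g)
    (hu : ∀ (p : ℤ × ℤ) (x : M), x ∈ g p → (X : (ZMod 2)[X]) • x ∈ g (p.1 - 1, p.2 - 1))
    (hne : (gradedNonTorsion g).Nonempty) :
    ∃ s, IsGreatest (gradedNonTorsion g) s :=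
  have hbdd := bddAbove_gradedNonTorsion g hg hu
  ⟨sSup (gradedNonTorsion g), Int.csSup_mem hne hbdd, fun _ hs => le_csSup hbdd hs⟩

theorem sub_one_mem_gradedNonTorsion {N : Type} [AddCommGroup N] [Module (ZMod 2)[X] N]
    [Module (ZMod 2) N] {gM : ℤ × ℤ → Submodule (ZMod 2) M} {gN : ℤ × ℤ → Submodule (ZMod 2) N}
    (σ : M →ₗ[(ZMod 2)[X]] N) (μ : N →ₗ[(ZMod 2)[X]] M)
    (hσ : ∀ (p : ℤ × ℤ) (x : M), x ∈ gM p → σ x ∈ gN (p.1 - 1, p.2 - 1))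
    (hμσ : ∀ x : M, μ (σ x) = (X ^ 2 : (ZMod 2)[X]) • x) {s : ℤ}
    (hs : s ∈ gradedNonTorsion gM) : s - 1 ∈ gradedNonTorsion gN := by
  obtain ⟨d, x, hx, hxt⟩ := hs
  exact ⟨d - 1, σ x, hσ (d, s) x hx, notMem_torsion_of_comp_eq_smul σ μ
    (mem_nonZeroDivisors_of_ne_zero (pow_ne_zero 2 X_ne_zero)) hμσ hxt⟩

end GradedNonTorsion

theorem abs_tau_sub_tau_le_one_general {M N : Type} [AddCommGroup M] [AddCommGroup N]
    [Module (Polynomial (ZMod 2)) M] [Module (Polynomial (ZMod 2)) N]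
    [Module (ZMod 2) M] [Module (ZMod 2) N]
    [IsScalarTower (ZMod 2) (Polynomial (ZMod 2)) M]
    [IsScalarTower (ZMod 2) (Polynomial (ZMod 2)) N]
    [Module.Finite (Polynomial (ZMod 2)) M] [Module.Finite (Polynomial (ZMod 2)) N]
    (gM : ℤ × ℤ → Submodule (ZMod 2) M) (gN : ℤ × ℤ → Submodule (ZMod 2) N)
    (hMint : DirectSum.IsInternal gM) (hNint : DirectSum.IsInternal gN)
    (huM : ∀ (p : ℤ × ℤ) (x : M), x ∈ gM p →
      (X : Polynomial (ZMod 2)) • x ∈ gM (p.1 - 1, p.2 - 1))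
    (huN : ∀ (p : ℤ × ℤ) (y : N), y ∈ gN p →
      (X : Polynomial (ZMod 2)) • y ∈ gN (p.1 - 1, p.2 - 1))
    (hrkM : ∃ x : M, x ∉ Submodule.torsion (Polynomial (ZMod 2)) M)
    (σ : M →ₗ[Polynomial (ZMod 2)] N) (μ : N →ₗ[Polynomial (ZMod 2)] M)
    (hσ : ∀ (p : ℤ × ℤ) (x : M), x ∈ gM p → σ x ∈ gN (p.1 - 1, p.2 - 1))
    (hμ : ∀ (p : ℤ × ℤ) (y : N), y ∈ gN p → μ y ∈ gM (p.1 - 1, p.2 - 1))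
    (hμσ : ∀ x : M, μ (σ x) = (X ^ 2 : Polynomial (ZMod 2)) • x)
    (hσμ : ∀ y : N, σ (μ y) = (X ^ 2 : Polynomial (ZMod 2)) • y) :
    (∃ sM : ℤ, IsGreatest (gradedNonTorsion gM) sM) ∧
    (∃ sN : ℤ, IsGreatest (gradedNonTorsion gN) sN) ∧
    ∀ sM sN : ℤ, IsGreatest (gradedNonTorsion gM) sM →
      IsGreatest (gradedNonTorsion gN) sN → |(-sM) - (-sN)| ≤ 1 := by
  obtain ⟨s, hs⟩ := gradedNonTorsion_nonempty gM hMint hrkM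
  have hσ_shift {s} : s ∈ gradedNonTorsion gM → s - 1 ∈ gradedNonTorsion gN :=
    sub_one_mem_gradedNonTorsion σ μ hσ hμσ
  have hμ_shift {s} : s ∈ gradedNonTorsion gN → s - 1 ∈ gradedNonTorsion gM :=
    sub_one_mem_gradedNonTorsion μ σ hμ hσμ
  refine ⟨isGreatest_gradedNonTorsion gM hMint huM ⟨s, hs⟩,
    isGreatest_gradedNonTorsion gN hNint huN ⟨s - 1, hσ_shift hs⟩,
    fun sM sN hsM hsN => abs_le.mpr ⟨?_, ?_⟩⟩
  · linarith [hsN.2 (hσ_shift hsM.1)]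
  · linarith [hsM.2 (hμ_shift hsN.1)]

/-- Let `M`, `N` be finitely generated bigraded `𝔽₂[u]`-modules of nonzero rank, with
`u` homogeneous of bidegree `(−1, −½)` (here the Alexander grading is doubled, so `u`
has bidegree `(−1, −1)`).  If `σ : M → N` and `μ : N → M` are bigraded module maps of
bidegree `(−1, −½)` (doubled: `(−1, −1)`) with `μ∘σ = u²` and `σ∘μ = u²`, then the
invariants `τ(M) = −2·max{A(x) : x homogeneous non-torsion}` are defined and satisfy
`|τ(M) − τ(N)| ≤ 1`. -/
theorem abs_tau_sub_tau_le_one {M N : Type} [AddCommGroup M] [AddCommGroup N]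
    [Module (Polynomial (ZMod 2)) M] [Module (Polynomial (ZMod 2)) N]
    [Module (ZMod 2) M] [Module (ZMod 2) N]
    [IsScalarTower (ZMod 2) (Polynomial (ZMod 2)) M]
    [IsScalarTower (ZMod 2) (Polynomial (ZMod 2)) N]
    [Module.Finite (Polynomial (ZMod 2)) M] [Module.Finite (Polynomial (ZMod 2)) N]
    (gM : ℤ × ℤ → Submodule (ZMod 2) M) (gN : ℤ × ℤ → Submodule (ZMod 2) N)
    (hMint : DirectSum.IsInternal gM) (hNint : DirectSum.IsInternal gN)
    (huM : ∀ (p : ℤ × ℤ) (x : M), x ∈ gM p →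
      (X : Polynomial (ZMod 2)) • x ∈ gM (p.1 - 1, p.2 - 1))
    (huN : ∀ (p : ℤ × ℤ) (y : N), y ∈ gN p →
      (X : Polynomial (ZMod 2)) • y ∈ gN (p.1 - 1, p.2 - 1))
    (hrkM : ∃ x : M, x ∉ Submodule.torsion (Polynomial (ZMod 2)) M)
    (hrkN : ∃ y : N, y ∉ Submodule.torsion (Polynomial (ZMod 2)) N)
    (σ : M →ₗ[Polynomial (ZMod 2)] N) (μ : N →ₗ[Polynomial (ZMod 2)] M)
    (hσ : ∀ (p : ℤ × ℤ) (x : M), x ∈ gM p → σ x ∈ gN (p.1 - 1, p.2 - 1))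
    (hμ : ∀ (p : ℤ × ℤ) (y : N), y ∈ gN p → μ y ∈ gM (p.1 - 1, p.2 - 1))
    (hμσ : ∀ x : M, μ (σ x) = (X ^ 2 : Polynomial (ZMod 2)) • x)
    (hσμ : ∀ y : N, σ (μ y) = (X ^ 2 : Polynomial (ZMod 2)) • y) :
    (∃ sM : ℤ, IsGreatest (gradedNonTorsion gM) sM) ∧
    (∃ sN : ℤ, IsGreatest (gradedNonTorsion gN) sN) ∧
    ∀ sM sN : ℤ, IsGreatest (gradedNonTorsion gM) sM →
      IsGreatest (gradedNonTorsion gN) sN → |(-sM) - (-sN)| ≤ 1 :=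
  abs_tau_sub_tau_le_one_general gM gN hMint hNint huM huN hrkM σ μ hσ hμ hμσ hσμ
end

section
/- Let M and N be finitely generated bigraded F₂[u]-modules of nonzero rank, with u homogeneous of bidegree (−1,−½) and Alexander gradings in ½ℤ. Define τ(M) = −2·max{A(x) : x homogeneous non-torsion in M}. Suppose there are bigraded module maps C₋ : M → N of bidegree (0,0) and C₊ : N → M of bidegree (−2,−1) with C₊∘C₋ = u²·id_M and C₋∘C₊ = u²·id_N. Then τ(N) ≤ τ(M) ≤ τ(N) + 2. -/
open Polynomial

lemma aux_greatest {M : Type} [AddCommGroup M] [Module (Polynomial (ZMod 2)) M]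
    [Module (ZMod 2) M] [IsScalarTower (ZMod 2) (Polynomial (ZMod 2)) M]
    [Module.Finite (Polynomial (ZMod 2)) M]
    (g : ℤ × ℤ → Submodule (ZMod 2) M) (hint : DirectSum.IsInternal g)
    (hu : ∀ (p : ℤ × ℤ) (x : M), x ∈ g p →
      (X : Polynomial (ZMod 2)) • x ∈ g (p.1 - 1, p.2 - 1))
    (hrk : ∃ x : M, x ∉ Submodule.torsion (Polynomial (ZMod 2)) M) :
    ∃ s, IsGreatest (gradedNonTorsion g) s := by
  haveI : SMulCommClass (ZMod 2) (Polynomial (ZMod 2)) M :=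
    IsScalarTower.to_smulCommClass
  -- decompose every element into homogeneous components
  choose f hf hfs using fun m : M =>
    (Submodule.mem_iSup_iff_exists_finsupp g m).mp
      (by rw [hint.submodule_iSup_eq_top]; trivial)
  -- a finite generating set
  obtain ⟨t, ht⟩ := Module.Finite.fg_top (R := Polynomial (ZMod 2)) (M := M)
  obtain ⟨S, hS⟩ := Finset.exists_le ((t.biUnion fun m => (f m).support).image Prod.snd)
  set T : Submodule (ZMod 2) M := ⨆ (q : ℤ × ℤ) (_ : q.2 ≤ S), g q with hT
  have memT : ∀ (q : ℤ × ℤ), q.2 ≤ S → ∀ x ∈ g q, x ∈ T := by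
    intro q hq x hx
    exact Submodule.mem_iSup_of_mem q (Submodule.mem_iSup_of_mem hq hx)
  -- T is closed under multiplication by X
  have hXT : ∀ x ∈ T, (X : Polynomial (ZMod 2)) • x ∈ T := by
    let L : M →ₗ[ZMod 2] M :=
      { toFun := fun x => (X : Polynomial (ZMod 2)) • x
        map_add' := fun a b => smul_add _ a b
        map_smul' := fun a x => (smul_comm (X : Polynomial (ZMod 2)) a x) }
    have hmap : Submodule.map L T ≤ T := by
      rw [hT, Submodule.map_iSup]
      refine iSup_le fun q => ?_
      rw [Submodule.map_iSup]
      refine iSup_le fun hq => ?_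
      rintro y ⟨x, hx, rfl⟩
      exact memT (q.1 - 1, q.2 - 1) (by simpa using by omega) _ (hu q x hx)
    intro x hx
    exact hmap ⟨x, hx, rfl⟩
  -- T is a Polynomial (ZMod 2)-submodule
  let Tp : Submodule (Polynomial (ZMod 2)) M :=
    { carrier := (T : Set M)
      add_mem' := fun ha hb => T.add_mem ha hb
      zero_mem' := T.zero_mem
      smul_mem' := by
        intro c x hx
        induction c using Polynomial.induction_on with
        | C a =>
            have : (C a : Polynomial (ZMod 2)) • x = a • x := by
              rw [← Polynomial.algebraMap_eq, algebraMap_smul]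
            rw [this]; exact T.smul_mem a hx
        | add p q hp hq =>
            rw [add_smul]; exact T.add_mem hp hq
        | monomial n a hp =>
            have : (C a * X ^ (n + 1) : Polynomial (ZMod 2)) • x
                = (X : Polynomial (ZMod 2)) • ((C a * X ^ n : Polynomial (ZMod 2)) • x) := by
              rw [← mul_smul]; ring_nf
            rw [this]; exact hXT _ hp }
  have hTtop : ∀ x : M, x ∈ T := by
    have hsub : (↑t : Set M) ⊆ (Tp : Set M) := by
      intro m hm
      show m ∈ T
      rw [← hfs m]
      refine Submodule.sum_mem T fun q hq => ?_
      have hq' : q.2 ≤ S := by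
        refine hS q.2 ?_
        exact Finset.mem_image_of_mem Prod.snd (Finset.mem_biUnion.mpr ⟨m, hm, hq⟩)
      exact memT q hq' _ (hf m q)
    intro x
    have : x ∈ Submodule.span (Polynomial (ZMod 2)) (↑t : Set M) := by
      rw [ht]; trivial
    exact (Submodule.span_le.mpr hsub) this
  -- gradings above S vanish
  have hbot : ∀ p : ℤ × ℤ, S < p.2 → ∀ x ∈ g p, x = 0 := by
    intro p hp x hx
    have h1 : x ∈ ⨆ (q : ℤ × ℤ) (_ : q ≠ p), g q := by
      have hle : T ≤ ⨆ (q : ℤ × ℤ) (_ : q ≠ p), g q := by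
        refine iSup_le fun q => iSup_le fun hq => ?_
        exact le_iSup_of_le q (le_iSup_of_le (by rintro rfl; omega) le_rfl)
      exact hle (hTtop x)
    exact (Submodule.disjoint_def.mp (hint.submodule_iSupIndep p)) x hx h1
  -- bounded above
  have hbdd : ∀ s : ℤ, s ∈ gradedNonTorsion g → s ≤ S := by
    rintro s ⟨d, x, hx, hnt⟩
    by_contra hcon
    push_neg at hcon
    exact hnt (by rw [hbot (d, s) hcon x hx]; exact Submodule.zero_mem _)
  -- nonempty
  obtain ⟨x, hx⟩ := hrk
  have hne : ∃ q : ℤ × ℤ, f x q ∉ Submodule.torsion (Polynomial (ZMod 2)) M := by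
    by_contra hcon
    push_neg at hcon
    refine hx ?_
    rw [← hfs x]
    exact Submodule.sum_mem _ fun q _ => hcon q
  obtain ⟨q, hq⟩ := hne
  have hmem : q.2 ∈ gradedNonTorsion g := ⟨q.1, f x q, by simpa using hf x q, hq⟩
  obtain ⟨s, hs1, hs2⟩ := Int.exists_greatest_of_bdd ⟨S, hbdd⟩ ⟨q.2, hmem⟩
  exact ⟨s, hs1, hs2⟩

/-- Let `M`, `N` be finitely generated bigraded `𝔽₂[u]`-modules of nonzero rank, with
`u` of bidegree `(−1, −½)` (Alexander gradings doubled, so `u` has bidegree `(−1,−1)`).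
If `C₋ : M → N` has bidegree `(0,0)` and `C₊ : N → M` has bidegree `(−2,−1)`
(doubled: `(−2,−2)`) with `C₊∘C₋ = u²` and `C₋∘C₊ = u²`, then
`τ(N) ≤ τ(M) ≤ τ(N) + 2`, where `τ = −2·max{A(x) : x homogeneous non-torsion}`. -/
theorem tau_crossing_change_bound {M N : Type} [AddCommGroup M] [AddCommGroup N]
    [Module (Polynomial (ZMod 2)) M] [Module (Polynomial (ZMod 2)) N]
    [Module (ZMod 2) M] [Module (ZMod 2) N]
    [IsScalarTower (ZMod 2) (Polynomial (ZMod 2)) M]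
    [IsScalarTower (ZMod 2) (Polynomial (ZMod 2)) N]
    [Module.Finite (Polynomial (ZMod 2)) M] [Module.Finite (Polynomial (ZMod 2)) N]
    (gM : ℤ × ℤ → Submodule (ZMod 2) M) (gN : ℤ × ℤ → Submodule (ZMod 2) N)
    (hMint : DirectSum.IsInternal gM) (hNint : DirectSum.IsInternal gN)
    (huM : ∀ (p : ℤ × ℤ) (x : M), x ∈ gM p →
      (X : Polynomial (ZMod 2)) • x ∈ gM (p.1 - 1, p.2 - 1))
    (huN : ∀ (p : ℤ × ℤ) (y : N), y ∈ gN p →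
      (X : Polynomial (ZMod 2)) • y ∈ gN (p.1 - 1, p.2 - 1))
    (hrkM : ∃ x : M, x ∉ Submodule.torsion (Polynomial (ZMod 2)) M)
    (hrkN : ∃ y : N, y ∉ Submodule.torsion (Polynomial (ZMod 2)) N)
    (Cm : M →ₗ[Polynomial (ZMod 2)] N) (Cp : N →ₗ[Polynomial (ZMod 2)] M)
    (hCm : ∀ (p : ℤ × ℤ) (x : M), x ∈ gM p → Cm x ∈ gN p)
    (hCp : ∀ (p : ℤ × ℤ) (y : N), y ∈ gN p → Cp y ∈ gM (p.1 - 2, p.2 - 2))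
    (hpm : ∀ x : M, Cp (Cm x) = (X ^ 2 : Polynomial (ZMod 2)) • x)
    (hmp : ∀ y : N, Cm (Cp y) = (X ^ 2 : Polynomial (ZMod 2)) • y) :
    (∃ sM : ℤ, IsGreatest (gradedNonTorsion gM) sM) ∧
    (∃ sN : ℤ, IsGreatest (gradedNonTorsion gN) sN) ∧
    ∀ sM sN : ℤ, IsGreatest (gradedNonTorsion gM) sM →
      IsGreatest (gradedNonTorsion gN) sN → -sN ≤ -sM ∧ -sM ≤ -sN + 2 := by
  have hX2 : (X ^ 2 : Polynomial (ZMod 2)) ∈ nonZeroDivisors (Polynomial (ZMod 2)) :=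
    mem_nonZeroDivisors_of_ne_zero (pow_ne_zero 2 Polynomial.X_ne_zero)
  refine ⟨aux_greatest gM hMint huM hrkM, aux_greatest gN hNint huN hrkN, ?_⟩
  rintro sM sN ⟨⟨dM, x, hx, hxt⟩, hMub⟩ ⟨⟨dN, y, hy, hyt⟩, hNub⟩
  have h1 : sM ≤ sN := by
    refine hNub ⟨dM, Cm x, hCm (dM, sM) x hx, fun hcon => ?_⟩
    obtain ⟨a, ha⟩ := (Submodule.mem_torsion_iff _).mp hcon
    rw [Submonoid.smul_def] at ha
    refine hxt ((Submodule.mem_torsion_iff _).mpr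
      ⟨⟨(a : Polynomial (ZMod 2)) * X ^ 2, mul_mem a.2 hX2⟩, ?_⟩)
    show ((a : Polynomial (ZMod 2)) * X ^ 2) • x = 0
    rw [mul_smul, ← hpm x, ← map_smul, ha, map_zero]
  have h2 : sN - 2 ≤ sM := by
    refine hMub (a := sN - 2) ⟨dN - 2, Cp y, hCp (dN, sN) y hy, fun hcon => ?_⟩
    obtain ⟨a, ha⟩ := (Submodule.mem_torsion_iff _).mp hcon
    rw [Submonoid.smul_def] at ha
    refine hyt ((Submodule.mem_torsion_iff _).mpr
      ⟨⟨(a : Polynomial (ZMod 2)) * X ^ 2, mul_mem a.2 hX2⟩, ?_⟩)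
    show ((a : Polynomial (ZMod 2)) * X ^ 2) • y = 0
    rw [mul_smul, ← hmp y, ← map_smul, ha, map_zero]
  omega
end
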